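/- arXiv:1312.5219 — 5 statements merged into one kernel-verified Lean document; each statement's English description precedes it below -/
import Mathlib

section
/- With h, F, A as given, for every r ∈ (0,1): (d-1)·∫_r^1 A(s)^{d-2} b(s) ds = h(r)^{1-1/d} e^{-F(r)}. -/
/-!
Write `α = 1 - 1/d` and `G = h ^ α * exp (-F)`. Since `F' = α / h`, wherever `δ` is
differentiable `G' = -α δ' h ^ (α - 1) exp (-F)`, and this is exactly `-(d-1) A ^ (d-2) b`.
On every compact subinterval of `(0,1)` the function `h` is Lipschitz and positive and `F` is
`C¹`, so `G` is absolutely continuous there and `∫_r^t (d-1) A ^ (d-2) b = G r - G t`.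
As `t → 1`, `h t → 0` while `F t ≥ 0`, so `G t → 0`; the integrand being nonnegative, the
improper limit is the integral over `(r,1)`.
-/

open MeasureTheory Set intervalIntegral Filter Topology

theorem AbsolutelyContinuousOnInterval.intervalIntegrable_of_ae_hasDerivAt {f f' : ℝ → ℝ}
    {a b : ℝ} (hf : AbsolutelyContinuousOnInterval f a b)
    (hderiv : ∀ᵐ x, x ∈ uIcc a b → HasDerivAt f (f' x) x) :
    IntervalIntegrable f' volume a b := by
  refine hf.intervalIntegrable_deriv.congr_ae ((ae_restrict_iff' measurableSet_uIoc).2 ?_)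
  filter_upwards [hderiv] with x hx hxI
  exact (hx (uIoc_subset_uIcc hxI)).deriv

theorem AbsolutelyContinuousOnInterval.integral_eq_sub_of_ae_hasDerivAt {f f' : ℝ → ℝ}
    {a b : ℝ} (hf : AbsolutelyContinuousOnInterval f a b)
    (hderiv : ∀ᵐ x, x ∈ uIcc a b → HasDerivAt f (f' x) x) :
    ∫ x in a..b, f' x = f b - f a := by
  rw [← hf.integral_deriv_eq_sub]
  refine integral_congr_ae ?_
  filter_upwards [hderiv] with x hx hxI
  exact (hx (uIoc_subset_uIcc hxI)).deriv.symm

theorem intervalIntegral_eq_of_tendsto_of_nonneg {f : ℝ → ℝ} {a b I : ℝ} (hab : a < b)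
    (hf : ∀ x ∈ Ioo a b, 0 ≤ f x) (hint : ∀ t ∈ Ioo a b, IntervalIntegrable f volume a t)
    (hlim : Tendsto (fun t => ∫ x in a..t, f x) (𝓝[<] b) (𝓝 I)) :
    ∫ x in a..b, f x = I := by
  obtain ⟨u, -, hu_mem, hu_lim⟩ := exists_seq_strictMono_tendsto' hab
  have hcover : AECover (volume.restrict (Ioc a b)) atTop fun n => Ioc a (u n) :=
    aecover_Ioc_of_Ioc tendsto_const_nhds hu_lim
  have hrestrict : ∀ n, (volume.restrict (Ioc a b)).restrict (Ioc a (u n)) =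
      volume.restrict (Ioc a (u n)) := fun n => by
    rw [Measure.restrict_restrict measurableSet_Ioc,
      inter_eq_left.2 (Ioc_subset_Ioc_right (hu_mem n).2.le)]
  rw [integral_of_le hab.le]
  refine hcover.integral_eq_of_tendsto_of_nonneg_ae I ?_ (fun n => ?_) ?_
  · rw [EventuallyLE, ← restrict_Ioo_eq_restrict_Ioc]
    exact ae_restrict_of_forall_mem measurableSet_Ioo hf
  · rw [IntegrableOn, hrestrict]
    exact (hint (u n) (hu_mem n)).1
  · have hu_lim' : Tendsto u atTop (𝓝[<] b) :=
      tendsto_nhdsWithin_of_tendsto_nhds_of_eventually_within _ hu_lim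
        (Eventually.of_forall fun n => (hu_mem n).2)
    refine (hlim.comp hu_lim').congr fun n => ?_
    rw [Function.comp_apply, hrestrict, integral_of_le (hu_mem n).1.le]

theorem contDiffOn_one_of_hasDerivAt {f f' : ℝ → ℝ} {s : Set ℝ} (hs : IsOpen s)
    (hf : ∀ x ∈ s, HasDerivAt f (f' x) x) (hf' : ContinuousOn f' s) : ContDiffOn ℝ 1 f s := by
  rw [show (1 : WithTop ℕ∞) = 0 + 1 from rfl, contDiffOn_succ_iff_deriv_of_isOpen hs]
  refine ⟨fun x hx => (hf x hx).differentiableAt.differentiableWithinAt, by simp, ?_⟩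
  exact contDiffOn_zero.2 (hf'.congr fun x hx => (hf x hx).deriv)

theorem LipschitzOnWith.absolutelyContinuousOnInterval_rpow {f : ℝ → ℝ} {K : NNReal}
    {a b : ℝ} (p : ℝ) (hf : LipschitzOnWith K f (uIcc a b)) (hpos : ∀ x ∈ uIcc a b, 0 < f x) :
    AbsolutelyContinuousOnInterval (fun x => f x ^ p) a b := by
  have hrpow : LocallyLipschitzOn (Ioi 0) fun y : ℝ => y ^ p :=
    ContDiffOn.locallyLipschitzOn (convex_Ioi 0) fun y hy =>
      (Real.contDiffAt_rpow_const_of_ne (ne_of_gt hy)).contDiffWithinAt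
  obtain ⟨L, hL⟩ := (hrpow.mono (image_subset_iff.2 hpos)).exists_lipschitzOnWith_of_compact
    (isCompact_uIcc.image_of_continuousOn hf.continuousOn)
  exact (hL.comp hf (mapsTo_image f _)).absolutelyContinuousOnInterval

theorem hasDerivAt_intervalIntegral_of_continuousOn_Ioo {g : ℝ → ℝ} {p q a s : ℝ}
    (hg : ContinuousOn g (Ioo p q)) (ha : a ∈ Ioo p q) (hs : s ∈ Ioo p q) :
    HasDerivAt (fun r => ∫ x in a..r, g x) (g s) s :=
  integral_hasDerivAt_right ((hg.mono (ordConnected_Ioo.uIcc_subset ha hs)).intervalIntegrable)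
    (hg.stronglyMeasurableAtFilter isOpen_Ioo s hs) (hg.continuousAt (isOpen_Ioo.mem_nhds hs))

theorem tendsto_rpow_mul_exp_neg_of_tendsto_zero {ι : Type*} {l : Filter ι} {u v : ι → ℝ}
    {α : ℝ} (hα : 0 < α) (hu : Tendsto u l (𝓝 0)) (hv : ∀ᶠ i in l, 0 ≤ v i) :
    Tendsto (fun i => u i ^ α * Real.exp (-v i)) l (𝓝 0) := by
  have hu_pow : Tendsto (fun i => u i ^ α) l (𝓝 0) := by
    simpa [Function.comp_def, Real.zero_rpow hα.ne'] using
      (Real.continuousAt_rpow_const 0 α (Or.inr hα.le)).tendsto.comp hu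
  refine squeeze_zero_norm' ?_ (by simpa using hu_pow.norm)
  filter_upwards [hv] with i hi
  rw [norm_mul, Real.norm_of_nonneg (Real.exp_pos _).le]
  exact mul_le_of_le_one_right (norm_nonneg _) (Real.exp_le_one_iff.2 (neg_nonpos.2 hi))

section

variable {α : ℝ} {h F : ℝ → ℝ}

theorem hasDerivAt_of_eq_mul_integral_one_div
    (hF : ∀ r, F r = α * ∫ s in (1/2 : ℝ)..r, 1 / h s) (hcont : ContinuousOn h (Ioo 0 1))
    (hpos : ∀ s ∈ Ioo (0:ℝ) 1, 0 < h s) {s : ℝ} (hs : s ∈ Ioo (0:ℝ) 1) :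
    HasDerivAt F (α * (1 / h s)) s := by
  rw [funext hF]
  exact (hasDerivAt_intervalIntegral_of_continuousOn_Ioo
    (continuousOn_const.div hcont fun x hx => (hpos x hx).ne')
    ⟨by norm_num, by norm_num⟩ hs).const_mul α

theorem nonneg_of_eq_mul_integral_one_div (hα : 0 ≤ α)
    (hF : ∀ r, F r = α * ∫ s in (1/2 : ℝ)..r, 1 / h s) (hpos : ∀ s ∈ Ioo (0:ℝ) 1, 0 < h s)
    {s : ℝ} (hs : s ∈ Ico (1/2 : ℝ) 1) : 0 ≤ F s := by
  rw [hF]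
  refine mul_nonneg hα (integral_nonneg hs.1 fun u hu => ?_)
  exact (one_div_pos.2 (hpos u ⟨by linarith [hu.1], hu.2.trans_lt hs.2⟩)).le

theorem hasDerivAt_rpow_mul_exp_neg {h' s : ℝ} (hh : HasDerivAt h h' s)
    (hF : HasDerivAt F (α * (1 / h s)) s) (hpos : 0 < h s) :
    HasDerivAt (fun x => h x ^ α * Real.exp (-F x))
      (-(α * (1 - h') * h s ^ (α - 1) * Real.exp (-F s))) s := by
  refine ((hh.rpow_const (p := α) (Or.inl hpos.ne')).mul hF.neg.exp).congr_deriv ?_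
  rw [Real.rpow_sub_one hpos.ne', Pi.neg_apply]
  field_simp
  ring

theorem absolutelyContinuousOnInterval_rpow_mul_exp_neg {K : NNReal} {a b : ℝ}
    (hh : LipschitzOnWith K h (uIcc a b)) (hpos : ∀ x ∈ uIcc a b, 0 < h x)
    (hF : ContDiffOn ℝ 1 F (uIcc a b)) :
    AbsolutelyContinuousOnInterval (fun x => h x ^ α * Real.exp (-F x)) a b :=
  (hh.absolutelyContinuousOnInterval_rpow α hpos).mul
    (hF.neg.exp).absolutelyContinuousOnInterval

theorem integral_mul_rpow_mul_exp_neg_eq {h' : ℝ → ℝ} {K : NNReal} {r : ℝ} (hα : 0 < α)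
    (hlip : LipschitzOnWith K h (Icc 0 1)) (h1 : h 1 = 0) (hpos : ∀ s ∈ Ioo (0:ℝ) 1, 0 < h s)
    (hderiv : ∀ᵐ s, s ∈ Ioo (0:ℝ) 1 → HasDerivAt h (h' s) s)
    (hh' : ∀ s ∈ Ioo (0:ℝ) 1, h' s ≤ 1)
    (hF : ∀ r, F r = α * ∫ s in (1/2 : ℝ)..r, 1 / h s) (hr : r ∈ Ioo (0:ℝ) 1) :
    ∫ s in r..1, α * (1 - h' s) * h s ^ (α - 1) * Real.exp (-F s)
      = h r ^ α * Real.exp (-F r) := by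
  set G : ℝ → ℝ := fun x => h x ^ α * Real.exp (-F x)
  have hF_deriv : ∀ s ∈ Ioo (0:ℝ) 1, HasDerivAt F (α * (1 / h s)) s := fun s hs =>
    hasDerivAt_of_eq_mul_integral_one_div hF (hlip.continuousOn.mono Ioo_subset_Icc_self) hpos hs
  have hF_C1 : ContDiffOn ℝ 1 F (Ioo 0 1) := contDiffOn_one_of_hasDerivAt isOpen_Ioo hF_deriv
    (continuousOn_const.mul (continuousOn_const.div (hlip.continuousOn.mono Ioo_subset_Icc_self)
      fun s hs => (hpos s hs).ne'))
  have hFTC : ∀ t ∈ Ioo r 1,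
      IntervalIntegrable (fun s => α * (1 - h' s) * h s ^ (α - 1) * Real.exp (-F s)) volume r t ∧
      ∫ s in r..t, α * (1 - h' s) * h s ^ (α - 1) * Real.exp (-F s) = G r - G t := by
    intro t ht
    have hsub : uIcc r t ⊆ Ioo 0 1 := by
      rw [uIcc_of_le ht.1.le]; exact Icc_subset_Ioo hr.1 ht.2
    have hG_ac : AbsolutelyContinuousOnInterval G r t :=
      absolutelyContinuousOnInterval_rpow_mul_exp_neg (hlip.mono (hsub.trans Ioo_subset_Icc_self))
        (fun x hx => hpos x (hsub hx)) (hF_C1.mono hsub)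
    have hG_deriv : ∀ᵐ s, s ∈ uIcc r t →
        HasDerivAt G (-(α * (1 - h' s) * h s ^ (α - 1) * Real.exp (-F s))) s := by
      filter_upwards [hderiv] with s hs hsI
      exact hasDerivAt_rpow_mul_exp_neg (hs (hsub hsI)) (hF_deriv s (hsub hsI))
        (hpos s (hsub hsI))
    refine ⟨by simpa [Pi.neg_def] using (hG_ac.intervalIntegrable_of_ae_hasDerivAt hG_deriv).neg,
      ?_⟩
    have hG_ftc := hG_ac.integral_eq_sub_of_ae_hasDerivAt hG_deriv
    rw [intervalIntegral.integral_neg] at hG_ftc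
    linarith
  refine intervalIntegral_eq_of_tendsto_of_nonneg hr.2 (fun s hs => ?_)
    (fun t ht => (hFTC t ht).1) ?_
  · have hs' : s ∈ Ioo (0:ℝ) 1 := ⟨hr.1.trans hs.1, hs.2⟩
    have := hpos s hs'
    have := sub_nonneg.2 (hh' s hs')
    positivity
  · have hh_lim : Tendsto h (𝓝[<] 1) (𝓝 0) := h1 ▸
      ((hlip.continuousOn 1 (right_mem_Icc.2 zero_le_one)).mono_of_mem_nhdsWithin
        (Icc_mem_nhdsLT one_pos)).tendsto
    have hF_nonneg : ∀ᶠ s in 𝓝[<] (1:ℝ), 0 ≤ F s :=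
      eventually_of_mem (Ico_mem_nhdsLT (by norm_num)) fun s hs =>
        nonneg_of_eq_mul_integral_one_div hα.le hF hpos hs
    have hG_lim : Tendsto G (𝓝[<] 1) (𝓝 0) :=
      tendsto_rpow_mul_exp_neg_of_tendsto_zero hα hh_lim hF_nonneg
    have hlim := (tendsto_const_nhds (x := G r)).sub hG_lim
    rw [sub_zero] at hlim
    exact hlim.congr' (eventually_of_mem (Ioo_mem_nhdsLT hr.2) fun t ht => ((hFTC t ht).2).symm)

end

theorem sub_one_mul_rpow_exp_pow_mul {d : ℕ} (hd : 2 ≤ d) {x : ℝ} (hx : 0 < x) (y F : ℝ) :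
    ((d:ℝ) - 1) * ((x ^ (1/(d:ℝ)) * Real.exp F) ^ (d - 2) *
      ((y / d) * x ^ (-1 + 1/(d:ℝ)) * Real.exp (-((d:ℝ) - 1) * F)))
    = (1 - 1/(d:ℝ)) * y * x ^ ((1 - 1/(d:ℝ)) - 1) * Real.exp (-F) := by
  have hd0 : (d:ℝ) ≠ 0 := by positivity
  have hcast : ((d - 2 : ℕ) : ℝ) = d - 2 := by push_cast [Nat.cast_sub hd]; ring
  rw [mul_pow, ← Real.rpow_natCast (x ^ _), ← Real.rpow_mul hx.le, ← Real.exp_nat_mul, hcast]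
  have hx_pow : x ^ (1/(d:ℝ) * (d - 2)) * x ^ (-1 + 1/(d:ℝ)) = x ^ ((1 - 1/(d:ℝ)) - 1) := by
    rw [← Real.rpow_add hx]; congr 1; field_simp; ring
  have hexp : Real.exp ((d - 2) * F) * Real.exp (-((d:ℝ) - 1) * F) = Real.exp (-F) := by
    rw [← Real.exp_add]; ring_nf
  calc _ = ((d:ℝ) - 1) / d * y * (x ^ (1/(d:ℝ) * (d - 2)) * x ^ (-1 + 1/(d:ℝ)))
        * (Real.exp ((d - 2) * F) * Real.exp (-((d:ℝ) - 1) * F)) := by ring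
    _ = _ := by rw [hx_pow, hexp]; field_simp

theorem integral_A_pow_d_sub_two_general
    (d : ℕ) (hd : 2 ≤ d) (δ δ' : ℝ → ℝ)
    (hlip : ∀ s ∈ Set.Icc (0:ℝ) 1, ∀ t ∈ Set.Icc (0:ℝ) 1,
      |δ s - δ t| ≤ (d : ℝ) * |s - t|)
    (h1 : δ 1 = 1)
    (hlt : ∀ t ∈ Set.Ioo (0:ℝ) 1, δ t < t)
    (hderiv : ∀ᵐ t ∂(volume.restrict (Set.Icc (0:ℝ) 1)), HasDerivAt δ (δ' t) t)
    (hd' : ∀ t ∈ Set.Icc (0:ℝ) 1, δ' t ∈ Set.Icc (0:ℝ) (d:ℝ))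
    (h F A b : ℝ → ℝ)
    (hh : ∀ r, h r = r - δ r)
    (hF : ∀ r, F r = (((d:ℝ) - 1) / d) * ∫ s in (1/2 : ℝ)..r, 1 / h s)
    (hA : ∀ r, A r = h r ^ (1/(d:ℝ)) * Real.exp (F r))
    (hb : ∀ r, b r = (δ' r / d) * h r ^ (-1 + 1/(d:ℝ)) *
      Real.exp (-((d:ℝ) - 1) * F r)) :
    ∀ r ∈ Set.Ioo (0:ℝ) 1,
      ((d : ℝ) - 1) * ∫ s in r..(1:ℝ), A s ^ (d - 2) * b s
        = h r ^ (1 - 1/(d:ℝ)) * Real.exp (-F r) := by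
  intro r hr
  have hα : 0 < 1 - 1/(d:ℝ) := by
    have : (2:ℝ) ≤ d := by exact_mod_cast hd
    rw [sub_pos, div_lt_one (by linarith)]; linarith
  have hh_eq : h = fun r => r - δ r := funext hh
  have hpos : ∀ s ∈ Ioo (0:ℝ) 1, 0 < h s := fun s hs => by rw [hh]; linarith [hlt s hs]
  have hδ_lip : LipschitzOnWith (Real.toNNReal d) δ (Icc 0 1) :=
    LipschitzOnWith.of_dist_le' fun x hx y hy => by simpa only [Real.dist_eq] using hlip x hx y hy
  have hh_deriv : ∀ᵐ s, s ∈ Ioo (0:ℝ) 1 → HasDerivAt h (1 - δ' s) s := by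
    filter_upwards [(ae_restrict_iff' measurableSet_Icc).1 hderiv] with s hs hsI
    rw [hh_eq]
    exact (hasDerivAt_id s).sub (hs (Ioo_subset_Icc_self hsI))
  rw [← integral_mul_rpow_mul_exp_neg_eq hα (hh_eq ▸ LipschitzWith.id.lipschitzOnWith.sub hδ_lip)
    (by rw [hh, h1, sub_self]) hpos hh_deriv
    (fun s hs => by linarith [(hd' s (Ioo_subset_Icc_self hs)).1])
    (fun r => by rw [hF]; congr 1; field_simp) hr, ← intervalIntegral.integral_const_mul]
  refine integral_congr_Ioo_of_le hr.2.le fun s hs => ?_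
  rw [hA, hb, sub_one_mul_rpow_exp_pow_mul hd (hpos s ⟨hr.1.trans hs.1, hs.2⟩), sub_sub_cancel]

/-- (d-1)·∫_r^1 A(s)^{d-2} b(s) ds = h(r)^{1-1/d} e^{-F(r)} for r ∈ (0,1). -/
theorem integral_A_pow_d_sub_two
    (d : ℕ) (hd : 2 ≤ d) (δ δ' : ℝ → ℝ)
    (hmono : MonotoneOn δ (Set.Icc 0 1))
    (hlip : ∀ s ∈ Set.Icc (0:ℝ) 1, ∀ t ∈ Set.Icc (0:ℝ) 1,
      |δ s - δ t| ≤ (d : ℝ) * |s - t|)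
    (h0 : δ 0 = 0) (h1 : δ 1 = 1)
    (hlt : ∀ t ∈ Set.Ioo (0:ℝ) 1, δ t < t)
    (hderiv : ∀ᵐ t ∂(volume.restrict (Set.Icc (0:ℝ) 1)), HasDerivAt δ (δ' t) t)
    (hd' : ∀ t ∈ Set.Icc (0:ℝ) 1, δ' t ∈ Set.Icc (0:ℝ) (d:ℝ))
    (h F A b : ℝ → ℝ)
    (hh : ∀ r, h r = r - δ r)
    (hF : ∀ r, F r = (((d:ℝ) - 1) / d) * ∫ s in (1/2 : ℝ)..r, 1 / h s)
    (hA : ∀ r, A r = h r ^ (1/(d:ℝ)) * Real.exp (F r))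
    (hA0 : A 0 = 0)
    (hb : ∀ r, b r = (δ' r / d) * h r ^ (-1 + 1/(d:ℝ)) *
      Real.exp (-((d:ℝ) - 1) * F r)) :
    ∀ r ∈ Set.Ioo (0:ℝ) 1,
      ((d : ℝ) - 1) * ∫ s in r..(1:ℝ), A s ^ (d - 2) * b s
        = h r ^ (1 - 1/(d:ℝ)) * Real.exp (-F r) :=
  integral_A_pow_d_sub_two_general d hd δ δ' hlip h1 hlt hderiv hd' h F A b hh hF hA hb
end

section
/- Let X = (X_1,...,X_d) be an absolutely continuous random vector with density f and continuous marginal CDFs F_i. Then the differential entropy decomposes as H(X) = Σ_{i=1}^d H(X_i) + H(U), where U = (F_1(X_1),...,F_d(X_d)) is distributed according to the copula of X. -/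
/-!
Writing `F x = (F₁ x₁, …, F_d x_d)`, the copula factorisation `f x = c (F x) * ∏ i, fᵢ xᵢ`
splits `f log f` pointwise into `f log (c ∘ F) + ∑ i, f log fᵢ(xᵢ)`. Integrated against `f`,
the term `log fᵢ(xᵢ)` only sees the `i`-th marginal and gives `∫ fᵢ log fᵢ`. The copula term
equals `(∏ i, fᵢ xᵢ) * (c log c)(F x)`, and `F` pushes the product of the marginals forward to
the uniform distribution on `[0,1]^d` (the probability integral transform in each coordinate),
so it integrates to `∫_{[0,1]^d} c log c`.
-/

open MeasureTheory Set Real ProbabilityTheory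
open scoped ENNReal

namespace MeasureTheory

theorem lintegral_fin_prod_eq_prod {n : ℕ} {E : Type*} [MeasurableSpace E]
    {μ : Fin n → Measure E} [∀ i, SigmaFinite (μ i)] {g : Fin n → E → ℝ≥0∞}
    (hg : ∀ i, Measurable (g i)) :
    ∫⁻ x, ∏ i, g i (x i) ∂Measure.pi μ = ∏ i, ∫⁻ t, g i t ∂μ i := by
  induction n with
  | zero => simp
  | succ n ih =>
    calc ∫⁻ x, ∏ i, g i (x i) ∂Measure.pi μ
        = ∫⁻ x, g 0 x.1 * ∏ i : Fin n, g i.succ (x.2 i)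
            ∂(μ 0).prod (Measure.pi fun i => μ i.succ) := by
          rw [← ((measurePreserving_piFinSuccAbove μ 0).symm).lintegral_comp
            (f := fun x => ∏ i, g i (x i))
            (Finset.measurable_prod _ fun i _ => (hg i).comp (measurable_pi_apply i))]
          simp [MeasurableEquiv.piFinSuccAbove_symm_apply, Fin.prod_univ_succ,
            Fin.insertNthEquiv, Fin.zero_succAbove]
      _ = (∫⁻ t, g 0 t ∂μ 0) * ∏ i : Fin n, ∫⁻ t, g i.succ t ∂μ i.succ := by
          rw [← ih fun i => hg i.succ, ← lintegral_prod_mul (hg 0).aemeasurable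
            (Finset.measurable_prod _ fun i _ => (hg i.succ).comp
              (measurable_pi_apply i)).aemeasurable]
      _ = ∏ i, ∫⁻ t, g i t ∂μ i := by rw [Fin.prod_univ_succ]

theorem Measure.pi_withDensity {n : ℕ} {E : Type*} [MeasurableSpace E]
    {μ : Fin n → Measure E} [∀ i, SigmaFinite (μ i)] {g : Fin n → E → ℝ≥0∞}
    [∀ i, SigmaFinite ((μ i).withDensity (g i))] (hg : ∀ i, Measurable (g i)) :
    (Measure.pi μ).withDensity (fun x => ∏ i, g i (x i))
      = Measure.pi fun i => (μ i).withDensity (g i) := by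
  refine (Measure.pi_eq fun s hs => ?_).symm
  simp_rw [withDensity_apply _ (.univ_pi hs), Measure.restrict_pi_pi,
    lintegral_fin_prod_eq_prod hg, withDensity_apply _ (hs _)]

section WithDensityOfReal

variable {α β : Type*} [MeasurableSpace α] [MeasurableSpace β] {μ : Measure α}
  {f : α → ℝ}

theorem isProbabilityMeasure_withDensity_ofReal (hf0 : ∀ x, 0 ≤ f x)
    (hf1 : ∫ x, f x ∂μ = 1) :
    IsProbabilityMeasure (μ.withDensity fun x => ENNReal.ofReal (f x)) := by
  constructor
  rw [withDensity_apply _ .univ, Measure.restrict_univ, ← ofReal_integral_eq_lintegral_ofReal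
    (.of_integral_ne_zero (by simp [hf1])) (.of_forall hf0), hf1, ENNReal.ofReal_one]

theorem integral_withDensity_ofReal (hf : Measurable f) (hf0 : ∀ x, 0 ≤ f x) (G : α → ℝ) :
    ∫ x, G x ∂μ.withDensity (fun x => ENNReal.ofReal (f x)) = ∫ x, f x * G x ∂μ := by
  simp_rw [integral_withDensity_eq_integral_toReal_smul hf.ennreal_ofReal
    (.of_forall fun _ => ENNReal.ofReal_lt_top), ENNReal.toReal_ofReal (hf0 _), smul_eq_mul]

theorem integrable_withDensity_ofReal_iff (hf : Measurable f) (hf0 : ∀ x, 0 ≤ f x)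
    {G : α → ℝ} :
    Integrable G (μ.withDensity fun x => ENNReal.ofReal (f x))
      ↔ Integrable (fun x => f x * G x) μ := by
  simp_rw [integrable_withDensity_iff_integrable_smul' hf.ennreal_ofReal
    (.of_forall fun _ => ENNReal.ofReal_lt_top), ENNReal.toReal_ofReal (hf0 _), smul_eq_mul]

variable {φ : α → β} {ν : Measure β} {G : β → ℝ}

theorem integrable_mul_comp_of_map_withDensity (hf : Measurable f) (hf0 : ∀ x, 0 ≤ f x)
    (hφ : Measurable φ) (hmap : (μ.withDensity fun x => ENNReal.ofReal (f x)).map φ = ν)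
    (hG : Integrable G ν) :
    Integrable (fun x => f x * G (φ x)) μ := by
  subst hmap
  rw [← integrable_withDensity_ofReal_iff hf hf0]
  exact hG.comp_measurable hφ

theorem integral_mul_comp_of_map_withDensity (hf : Measurable f) (hf0 : ∀ x, 0 ≤ f x)
    (hφ : Measurable φ) (hmap : (μ.withDensity fun x => ENNReal.ofReal (f x)).map φ = ν)
    (hG : AEStronglyMeasurable G ν) :
    ∫ x, f x * G (φ x) ∂μ = ∫ y, G y ∂ν := by
  subst hmap
  rw [integral_map hφ.aemeasurable hG, integral_withDensity_ofReal hf hf0]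

end WithDensityOfReal

end MeasureTheory

namespace ProbabilityTheory

theorem map_cdf_eq_restrict_Icc (μ : Measure ℝ) [IsProbabilityMeasure μ]
    (hcont : Continuous (cdf μ)) (hmono : StrictMono (cdf μ)) :
    μ.map (cdf μ) = volume.restrict (Icc 0 1) := by
  refine Measure.ext_of_Iic _ _ fun u => ?_
  have hinter : Iic u ∩ Icc 0 1 = Icc 0 (min u 1) := by
    ext; simp only [mem_inter_iff, mem_Iic, mem_Icc, le_min_iff]; tauto
  rw [Measure.map_apply hcont.measurable measurableSet_Iic,
    Measure.restrict_apply measurableSet_Iic, hinter, Real.volume_Icc, sub_zero]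
  rcases le_or_gt u 0 with hu0 | hu0
  · have hempty : cdf μ ⁻¹' Iic u = ∅ := eq_empty_of_forall_notMem fun t ht =>
      ((cdf_nonneg μ (t - 1)).trans_lt (hmono (sub_one_lt t))).not_ge (ht.trans hu0)
    simp [hempty, ENNReal.ofReal_eq_zero.2 hu0]
  rcases le_or_gt 1 u with hu1 | hu1
  · have huniv : cdf μ ⁻¹' Iic u = univ := eq_univ_of_forall fun t =>
      ((hmono (lt_add_one t)).trans_le (cdf_le_one μ _)).le.trans hu1
    simp [huniv, hu1]
  obtain ⟨q, rfl⟩ : ∃ q, cdf μ q = u := intermediate_value_univ₂_eventually₂ hcont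
    continuous_const ((tendsto_cdf_atBot μ).eventually_le_const hu0)
    ((tendsto_cdf_atTop μ).eventually_const_le hu1)
  have hpre : cdf μ ⁻¹' Iic (cdf μ q) = Iic q := ext fun t => hmono.le_iff_le
  rw [hpre, ← ofReal_cdf, min_eq_left hu1.le]

theorem map_pi_cdf_eq_restrict_cube {ι : Type*} [Fintype ι] (μ : ι → Measure ℝ)
    [∀ i, IsProbabilityMeasure (μ i)] (hcont : ∀ i, Continuous (cdf (μ i)))
    (hmono : ∀ i, StrictMono (cdf (μ i))) :
    (Measure.pi μ).map (fun x i => cdf (μ i) (x i))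
      = volume.restrict (univ.pi fun _ : ι => Icc (0 : ℝ) 1) := by
  have (i : ι) : SigmaFinite ((μ i).map (cdf (μ i))) := by
    rw [map_cdf_eq_restrict_Icc _ (hcont i) (hmono i)]; infer_instance
  rw [Measure.pi_map_pi fun i => (hcont i).measurable.aemeasurable, volume_pi,
    Measure.restrict_pi_pi]
  simp_rw [map_cdf_eq_restrict_Icc _ (hcont _) (hmono _)]

theorem cdf_withDensity_ofReal {g : ℝ → ℝ} (hg : Measurable g) (hg0 : ∀ t, 0 ≤ g t)
    [IsProbabilityMeasure (volume.withDensity fun t => ENNReal.ofReal (g t))] (x : ℝ) :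
    cdf (volume.withDensity fun t => ENNReal.ofReal (g t)) x = ∫ t in Iic x, g t := by
  rw [cdf_eq_real, measureReal_def, withDensity_apply _ measurableSet_Iic,
    integral_eq_lintegral_of_nonneg_ae (.of_forall hg0) hg.aestronglyMeasurable]

theorem strictMono_cdf_withDensity {g : ℝ → ℝ≥0∞} (hg : Measurable g)
    (hpos : ∀ t, g t ≠ 0)
    [IsProbabilityMeasure (volume.withDensity g)] :
    StrictMono (cdf (volume.withDensity g)) := by
  intro s t hst
  have hIoc : volume.withDensity g (Ioc s t) ≠ 0 := by
    rw [Ne, withDensity_apply_eq_zero hg]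
    simpa [hpos] using hst
  rw [← ENNReal.ofReal_lt_ofReal_iff_of_nonneg (cdf_nonneg _ s), ofReal_cdf, ofReal_cdf,
    ← Iic_union_Ioc_eq_Iic hst.le, measure_union (Iic_disjoint_Ioc le_rfl) measurableSet_Ioc]
  exact ENNReal.lt_add_right (measure_ne_top _ _) hIoc

theorem map_withDensity_prod_eq_restrict_cube {n : ℕ} {g F : Fin n → ℝ → ℝ}
    (hg : ∀ i, Measurable (g i)) (hpos : ∀ i t, 0 < g i t)
    [∀ i, IsProbabilityMeasure (volume.withDensity fun t => ENNReal.ofReal (g i t))]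
    (hF : ∀ i t, F i t = ∫ s in Iic t, g i s) (hcont : ∀ i, Continuous (F i)) :
    (volume.withDensity fun x : Fin n → ℝ => ENNReal.ofReal (∏ i, g i (x i))).map
        (fun x i => F i (x i))
      = volume.restrict (univ.pi fun _ : Fin n => Icc (0 : ℝ) 1) := by
  obtain rfl : F = fun i => ⇑(cdf (volume.withDensity fun t => ENNReal.ofReal (g i t))) :=
    funext₂ fun i t =>
      (hF i t).trans (cdf_withDensity_ofReal (hg i) (fun t => (hpos i t).le) t).symm
  simp_rw [ENNReal.ofReal_prod_of_nonneg fun i _ => (hpos i _).le]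
  rw [volume_pi, Measure.pi_withDensity fun i => (hg i).ennreal_ofReal]
  exact map_pi_cdf_eq_restrict_cube _ hcont fun i => strictMono_cdf_withDensity
    (hg i).ennreal_ofReal fun t => (ENNReal.ofReal_pos.2 (hpos i t)).ne'

end ProbabilityTheory

theorem mul_log_eq_mul_log_add_sum {ι : Type*} [Fintype ι] {a b : ℝ} {p : ι → ℝ}
    (hp : ∀ i, p i ≠ 0) (h : a = b * ∏ i, p i) :
    a * log a = a * log b + ∑ i, a * log (p i) := by
  rcases eq_or_ne a 0 with rfl | ha
  · simp
  have hb : b ≠ 0 := by rintro rfl; simp [h] at ha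
  rw [← Finset.mul_sum, ← mul_add, h, log_mul hb (Finset.prod_ne_zero_iff.2 fun i _ => hp i),
    log_prod fun i _ => hp i]

theorem entropy_decomposition_copula_general
    (d : ℕ)
    (f : (Fin d → ℝ) → ℝ) (fi : Fin d → ℝ → ℝ) (Fc : Fin d → ℝ → ℝ)
    (c : (Fin d → ℝ) → ℝ)
    (hfmeas : Measurable f) (hfnn : ∀ x, 0 ≤ f x)
    (hfprob : ∫ x, f x = 1)
    (hfimeas : ∀ i, Measurable (fi i)) (hfipos : ∀ i t, 0 < fi i t)
    -- fi i is the i-th marginal density of f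
    (hmarg : ∀ i, (volume.withDensity (fun x => ENNReal.ofReal (f x))).map
      (fun x : Fin d → ℝ => x i)
      = volume.withDensity (fun t => ENNReal.ofReal (fi i t)))
    -- Fc i is the (continuous) CDF of the i-th marginal
    (hFc : ∀ i t, Fc i t = ∫ s in Set.Iic t, fi i s)
    (hFccont : ∀ i, Continuous (Fc i))
    -- c is the copula density of X
    (hcop : ∀ x, f x = c (fun i => Fc i (x i)) * ∏ i, fi i (x i))
    -- all entropies involved are well defined and finite
    (hinti : ∀ i, Integrable (fun t => fi i t * Real.log (fi i t)))
    (hintc : IntegrableOn (fun u => c u * Real.log (c u))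
      (Set.univ.pi (fun _ : Fin d => Set.Icc (0:ℝ) 1))) :
    -(∫ x, f x * Real.log (f x))
      = (∑ i, -(∫ t, fi i t * Real.log (fi i t)))
        + -(∫ u in Set.univ.pi (fun _ : Fin d => Set.Icc (0:ℝ) 1),
            c u * Real.log (c u)) := by
  have := isProbabilityMeasure_withDensity_ofReal hfnn hfprob
  have (i : Fin d) : IsProbabilityMeasure (volume.withDensity fun t => ENNReal.ofReal (fi i t)) :=
    hmarg i ▸ Measure.isProbabilityMeasure_map (measurable_pi_apply i).aemeasurable
  have hfi0 (i : Fin d) (t : ℝ) : 0 ≤ fi i t := (hfipos i t).le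
  have hprod0 (x : Fin d → ℝ) : 0 ≤ ∏ i, fi i (x i) :=
    Finset.prod_nonneg fun i _ => hfi0 i _
  have hprod : Measurable fun x : Fin d → ℝ => ∏ i, fi i (x i) := by fun_prop
  have hT : Measurable fun (x : Fin d → ℝ) i => Fc i (x i) :=
    measurable_pi_lambda _ fun i => (hFccont i).measurable.comp (measurable_pi_apply i)
  have hcube := map_withDensity_prod_eq_restrict_cube hfimeas hfipos hFc hFccont
  have hcop_log : (fun x => f x * log (c fun i => Fc i (x i)))
      = fun x => (∏ i, fi i (x i)) * (c (fun i => Fc i (x i)) * log (c fun i => Fc i (x i))) := by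
    ext x; rw [hcop x]; ring
  have hcop_int : Integrable fun x => f x * log (c fun i => Fc i (x i)) := by
    rw [hcop_log]
    exact integrable_mul_comp_of_map_withDensity (G := fun u => c u * log (c u)) hprod hprod0 hT
      hcube hintc
  have hlog_fi (i : Fin d) := (integrable_withDensity_ofReal_iff (hfimeas i) (hfi0 i)).2 (hinti i)
  have hmarg_int (i : Fin d) : Integrable fun x => f x * log (fi i (x i)) :=
    integrable_mul_comp_of_map_withDensity (G := fun t => log (fi i t)) hfmeas hfnn
      (measurable_pi_apply i) (hmarg i) (hlog_fi i)
  have hmarg_eq (i : Fin d) : ∫ x, f x * log (fi i (x i)) = ∫ t, fi i t * log (fi i t) := by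
    rw [integral_mul_comp_of_map_withDensity (G := fun t => log (fi i t)) hfmeas hfnn
      (measurable_pi_apply i) (hmarg i) (hlog_fi i).1,
      integral_withDensity_ofReal (hfimeas i) (hfi0 i)]
  simp_rw [mul_log_eq_mul_log_add_sum (fun i => (hfipos i _).ne') (hcop _)]
  rw [integral_add hcop_int (integrable_finsetSum _ fun i _ => hmarg_int i),
    integral_finsetSum _ fun i _ => hmarg_int i, hcop_log,
    integral_mul_comp_of_map_withDensity (G := fun u => c u * log (c u)) hprod hprod0 hT hcube
      hintc.1]
  simp_rw [hmarg_eq, Finset.sum_neg_distrib]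
  ring

/-- Entropy decomposition H(X) = Σᵢ H(Xᵢ) + H(U), where U follows the
copula of the absolutely continuous random vector X with density f, marginal densities
fi and marginal CDFs Fc. -/
theorem entropy_decomposition_copula
    (d : ℕ) (hd : 2 ≤ d)
    (f : (Fin d → ℝ) → ℝ) (fi : Fin d → ℝ → ℝ) (Fc : Fin d → ℝ → ℝ)
    (c : (Fin d → ℝ) → ℝ)
    (hfmeas : Measurable f) (hfnn : ∀ x, 0 ≤ f x)
    (hfprob : ∫ x, f x = 1)
    (hfimeas : ∀ i, Measurable (fi i)) (hfipos : ∀ i t, 0 < fi i t)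
    -- fi i is the i-th marginal density of f
    (hmarg : ∀ i, (volume.withDensity (fun x => ENNReal.ofReal (f x))).map
      (fun x : Fin d → ℝ => x i)
      = volume.withDensity (fun t => ENNReal.ofReal (fi i t)))
    -- Fc i is the (continuous) CDF of the i-th marginal
    (hFc : ∀ i t, Fc i t = ∫ s in Set.Iic t, fi i s)
    (hFccont : ∀ i, Continuous (Fc i))
    -- c is the copula density of X
    (hcop : ∀ x, f x = c (fun i => Fc i (x i)) * ∏ i, fi i (x i))
    -- all entropies involved are well defined and finite
    (hint : Integrable (fun x => f x * Real.log (f x)))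
    (hinti : ∀ i, Integrable (fun t => fi i t * Real.log (fi i t)))
    (hintc : IntegrableOn (fun u => c u * Real.log (c u))
      (Set.univ.pi (fun _ : Fin d => Set.Icc (0:ℝ) 1))) :
    -(∫ x, f x * Real.log (f x))
      = (∑ i, -(∫ t, fi i t * Real.log (fi i t)))
        + -(∫ u in Set.univ.pi (fun _ : Fin d => Set.Icc (0:ℝ) 1),
            c u * Real.log (c u)) :=
  entropy_decomposition_copula_general d f fi Fc c hfmeas hfnn hfprob hfimeas hfipos hmarg hFc
    hFccont hcop hinti hintc
end

section
/- For δ(t) = t^α with α ∈ (1,2] and d = 2, the density c_δ(u,v) = (α/4)·((2 - α u^{α-1})/(1-u^{α-1})^{α/(2α-2)})·v^{α-2}(1-v^{α-1})^{(2-α)/(2α-2)} for 0 < u ≤ v < 1 (extended symmetrically) integrates to uniform marginals: ∫_{[0,1]^2} c_δ(u,v) 1{u ≤ r} du dv = r for all r ∈ [0,1]. In particular when α = 2, c_δ ≡ 1. -/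
/-!
Write the density as `c(u, v) = a(min u v) * b(max u v)`. Splitting the slice integral at `v = u`
gives `∫₀¹ c(u, v) dv = A(u) b(u) + a(u) (B(1) - B(u))` for primitives `A' = a`, `B' = b`. For
`δ(t) = t^α` they are explicit, `A(t) = (α/2) t (1 - t^(α-1))^(-(2-α)/(2α-2))` with `A(0) = 0`
and `B(t) = -(2/α) (1 - t^(α-1))^(α/(2α-2))` with `B(1) = 0`, and `A b - a B = 1` on `(0, 1)`.
So every slice has mass one; since `c ≥ 0` this makes `c` integrable on the square, and Fubini
yields the uniform marginal.
-/

open MeasureTheory Set Real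

section Marginal

variable {X Y : Type*} [MeasurableSpace X] [MeasurableSpace Y] {μ : Measure X} {ν : Measure Y}
  [SFinite μ] [SFinite ν] {f : X × Y → ℝ} {s : Set X} {t : Set Y}

theorem integrableOn_prod_of_marginal_eq_one (hs : MeasurableSet s) (hμs : μ s ≠ ⊤)
    (ht : MeasurableSet t) (hf : Measurable f) (hf_nonneg : ∀ p ∈ s ×ˢ t, 0 ≤ f p)
    (hslice : ∀ᵐ x ∂μ.restrict s, IntegrableOn (fun y => f (x, y)) t ν)
    (hmarg : ∀ᵐ x ∂μ.restrict s, ∫ y in t, f (x, y) ∂ν = 1) :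
    IntegrableOn f (s ×ˢ t) (μ.prod ν) := by
  rw [IntegrableOn, ← Measure.prod_restrict,
    integrable_prod_iff hf.aestronglyMeasurable]
  refine ⟨hslice, (integrableOn_const (C := (1 : ℝ)) hμs).congr ?_⟩
  filter_upwards [hmarg, ae_restrict_mem hs] with x hx hxs
  rw [← hx]
  refine setIntegral_congr_fun ht fun y hy => ?_
  exact (Real.norm_of_nonneg (hf_nonneg (x, y) ⟨hxs, hy⟩)).symm

theorem setIntegral_prod_mul_fst_of_marginal_eq_one (hs : MeasurableSet s) (hμs : μ s ≠ ⊤)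
    (ht : MeasurableSet t) (hf : Measurable f) (hf_nonneg : ∀ p ∈ s ×ˢ t, 0 ≤ f p)
    (hslice : ∀ᵐ x ∂μ.restrict s, IntegrableOn (fun y => f (x, y)) t ν)
    (hmarg : ∀ᵐ x ∂μ.restrict s, ∫ y in t, f (x, y) ∂ν = 1)
    {w : X → ℝ} {C : ℝ} (hw : Measurable w) (hwC : ∀ x, ‖w x‖ ≤ C) :
    ∫ p in s ×ˢ t, f p * w p.1 ∂μ.prod ν = ∫ x in s, w x ∂μ := by
  have hint : IntegrableOn (fun p => f p * w p.1) (s ×ˢ t) (μ.prod ν) :=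
    (integrableOn_prod_of_marginal_eq_one hs hμs ht hf hf_nonneg hslice hmarg).mul_bdd
      (hw.comp measurable_fst).aestronglyMeasurable (ae_of_all _ fun p => hwC p.1)
  rw [setIntegral_prod _ hint]
  refine integral_congr_ae ?_
  filter_upwards [hmarg] with x hx
  rw [integral_mul_const, hx, one_mul]

end Marginal

section MinMax

variable {a b : ℝ → ℝ} {l u r : ℝ}

theorem eqOn_mul_min_max_of_le (hlu : l ≤ u) :
    EqOn (fun v => a (min u v) * b (max u v)) (fun v => a v * b u) (uIcc l u) := by
  intro v hv
  rw [uIcc_of_le hlu] at hv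
  simp only [min_eq_right hv.2, max_eq_left hv.2]

theorem eqOn_mul_min_max_of_ge (hur : u ≤ r) :
    EqOn (fun v => a (min u v) * b (max u v)) (fun v => a u * b v) (uIcc u r) := by
  intro v hv
  rw [uIcc_of_le hur] at hv
  simp only [min_eq_left hv.1, max_eq_right hv.1]

theorem intervalIntegrable_mul_min_max_of_le (hlu : l ≤ u) (ha : IntervalIntegrable a volume l u) :
    IntervalIntegrable (fun v => a (min u v) * b (max u v)) volume l u :=
  (ha.mul_const (b u)).congr_uIoo ((eqOn_mul_min_max_of_le hlu).symm.mono uIoo_subset_uIcc_self)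

theorem intervalIntegrable_mul_min_max_of_ge (hur : u ≤ r) (hb : IntervalIntegrable b volume u r) :
    IntervalIntegrable (fun v => a (min u v) * b (max u v)) volume u r :=
  (hb.const_mul (a u)).congr_uIoo ((eqOn_mul_min_max_of_ge hur).symm.mono uIoo_subset_uIcc_self)

theorem integral_mul_min_max (hlu : l ≤ u) (hur : u ≤ r)
    (ha : IntervalIntegrable a volume l u) (hb : IntervalIntegrable b volume u r) :
    ∫ v in l..r, a (min u v) * b (max u v) = (∫ v in l..u, a v) * b u + a u * ∫ v in u..r, b v := by
  rw [← intervalIntegral.integral_add_adjacent_intervals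
      (intervalIntegrable_mul_min_max_of_le hlu ha) (intervalIntegrable_mul_min_max_of_ge hur hb),
    intervalIntegral.integral_congr (eqOn_mul_min_max_of_le hlu),
    intervalIntegral.integral_congr (eqOn_mul_min_max_of_ge hur),
    intervalIntegral.integral_mul_const, intervalIntegral.integral_const_mul]

end MinMax

theorem setIntegral_Icc_zero_one_ite_le {r : ℝ} (hr : r ∈ Icc (0 : ℝ) 1) :
    ∫ x in Icc (0 : ℝ) 1, (if x ≤ r then (1 : ℝ) else 0) = r := by
  have hind : (fun x : ℝ => if x ≤ r then (1 : ℝ) else 0) = (Iic r).indicator 1 := by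
    ext x
    simp [indicator_apply]
  have hinter : Iic r ∩ Icc 0 1 = Icc 0 r := by
    ext x
    simp only [mem_inter_iff, mem_Iic, mem_Icc]
    grind
  rw [hind, integral_indicator_one measurableSet_Iic, measureReal_restrict_apply measurableSet_Iic,
    hinter, Real.volume_real_Icc_of_le hr.1, sub_zero]

namespace PowerDiagonal

noncomputable section

-- The paper's `a` and `b` for `δ(t) = t^α`; `powerDensity` is its `c_δ`.
def lowerFactor (α u : ℝ) : ℝ :=
  (α / 4) * ((2 - α * u ^ (α - 1)) / (1 - u ^ (α - 1)) ^ (α / (2 * α - 2)))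

def upperFactor (α v : ℝ) : ℝ :=
  v ^ (α - 2) * (1 - v ^ (α - 1)) ^ ((2 - α) / (2 * α - 2))

def lowerPrimitive (α t : ℝ) : ℝ :=
  (α / 2) * t * (1 - t ^ (α - 1)) ^ (-((2 - α) / (2 * α - 2)))

def upperPrimitive (α t : ℝ) : ℝ :=
  -(2 / α) * (1 - t ^ (α - 1)) ^ (α / (2 * α - 2))

def powerDensity (α x y : ℝ) : ℝ :=
  lowerFactor α (min x y) * upperFactor α (max x y)

end

variable {α u v : ℝ}

theorem one_sub_rpow_pos (hα : 1 < α) (hv0 : 0 ≤ v) (hv1 : v < 1) : 0 < 1 - v ^ (α - 1) :=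
  sub_pos.2 (rpow_lt_one hv0 hv1 (by linarith))

theorem self_mul_rpow_sub_two (hv : 0 < v) : v * v ^ (α - 2) = v ^ (α - 1) := by
  rw [mul_comm, ← rpow_add_one hv.ne']
  ring_nf

theorem hasDerivAt_one_sub_rpow (hv : 0 < v) :
    HasDerivAt (fun t => 1 - t ^ (α - 1)) (-((α - 1) * v ^ (α - 2))) v := by
  have h := (hasDerivAt_rpow_const (p := α - 1) (Or.inl hv.ne')).const_sub 1
  rwa [show α - 1 - 1 = α - 2 by ring] at h

theorem hasDerivAt_lowerPrimitive (hα : 1 < α) (hv0 : 0 < v) (hv1 : v < 1) :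
    HasDerivAt (lowerPrimitive α) (lowerFactor α v) v := by
  have hW : 0 < 1 - v ^ (α - 1) := one_sub_rpow_pos hα hv0.le hv1
  refine (((hasDerivAt_id v).const_mul (α / 2)).mul
    ((hasDerivAt_one_sub_rpow hv0).rpow_const (Or.inl hW.ne'))).congr_deriv ?_
  have hα1 : α - 1 ≠ 0 := sub_ne_zero.2 hα.ne'
  have hα2 : 2 * α - 2 ≠ 0 := by linarith
  have hexp : -((2 - α) / (2 * α - 2)) = -(α / (2 * α - 2)) + 1 := by field_simp; ring
  rw [hexp, add_sub_cancel_right, rpow_add_one hW.ne', rpow_neg hW.le]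
  simp only [lowerFactor, id, mul_one]
  have hX : (1 - v ^ (α - 1)) ^ (α / (2 * α - 2)) ≠ 0 := (rpow_pos_of_pos hW _).ne'
  field_simp
  rw [self_mul_rpow_sub_two hv0]
  ring

theorem hasDerivAt_upperPrimitive (hα : 1 < α) (hv0 : 0 < v) (hv1 : v < 1) :
    HasDerivAt (upperPrimitive α) (upperFactor α v) v := by
  have hW : 0 < 1 - v ^ (α - 1) := one_sub_rpow_pos hα hv0.le hv1
  refine (((hasDerivAt_one_sub_rpow hv0).rpow_const (Or.inl hW.ne')).const_mul
    (-(2 / α))).congr_deriv ?_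
  have hα1 : α - 1 ≠ 0 := sub_ne_zero.2 hα.ne'
  have hα2 : 2 * α - 2 ≠ 0 := by linarith
  rw [show α / (2 * α - 2) - 1 = (2 - α) / (2 * α - 2) by field_simp; ring]
  simp only [upperFactor]
  field_simp

theorem continuousOn_lowerPrimitive (hα : 1 < α) (hu1 : u < 1) :
    ContinuousOn (lowerPrimitive α) (Icc 0 u) := by
  intro t ht
  have hW : 0 < 1 - t ^ (α - 1) := one_sub_rpow_pos hα ht.1 (ht.2.trans_lt hu1)
  exact (((continuousAt_const.mul continuousAt_id).mul
    ((continuousAt_const.sub (continuousAt_rpow_const t _ (Or.inr (by linarith)))).rpow_const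
      (Or.inl hW.ne'))).continuousWithinAt)

theorem continuous_upperPrimitive (hα : 1 < α) : Continuous (upperPrimitive α) :=
  continuous_const.mul ((continuous_const.sub (continuous_rpow_const (by linarith))).rpow_const
    fun _ => Or.inr (div_nonneg (by linarith) (by linarith)))

theorem lowerFactor_nonneg (hα1 : 1 < α) (hα2 : α ≤ 2) (hu0 : 0 ≤ u) (hu1 : u ≤ 1) :
    0 ≤ lowerFactor α u := by
  have hw : u ^ (α - 1) ≤ 1 := rpow_le_one hu0 hu1 (by linarith)
  have hw0 : 0 ≤ u ^ (α - 1) := rpow_nonneg hu0 _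
  exact mul_nonneg (by linarith) (div_nonneg (by nlinarith) (rpow_nonneg (by linarith) _))

theorem upperFactor_nonneg (hα : 1 < α) (hv0 : 0 ≤ v) (hv1 : v ≤ 1) : 0 ≤ upperFactor α v :=
  mul_nonneg (rpow_nonneg hv0 _)
    (rpow_nonneg (sub_nonneg.2 (rpow_le_one hv0 hv1 (by linarith))) _)

theorem intervalIntegrable_lowerFactor (hα1 : 1 < α) (hα2 : α ≤ 2) (hu0 : 0 ≤ u) (hu1 : u < 1) :
    IntervalIntegrable (lowerFactor α) volume 0 u :=
  (intervalIntegrable_iff_integrableOn_Ioc_of_le hu0).2 <|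
    intervalIntegral.integrableOn_deriv_of_nonneg (continuousOn_lowerPrimitive hα1 hu1)
      (fun _ ht => hasDerivAt_lowerPrimitive hα1 ht.1 (ht.2.trans hu1))
      (fun _ ht => lowerFactor_nonneg hα1 hα2 ht.1.le (ht.2.trans hu1).le)

theorem intervalIntegrable_upperFactor (hα : 1 < α) (hu0 : 0 < u) (hu1 : u ≤ 1) :
    IntervalIntegrable (upperFactor α) volume u 1 :=
  (intervalIntegrable_iff_integrableOn_Ioc_of_le hu1).2 <|
    intervalIntegral.integrableOn_deriv_of_nonneg (continuous_upperPrimitive hα).continuousOn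
      (fun _ ht => hasDerivAt_upperPrimitive hα (hu0.trans ht.1) ht.2)
      (fun _ ht => upperFactor_nonneg hα (hu0.trans ht.1).le ht.2.le)

theorem integral_lowerFactor (hα1 : 1 < α) (hα2 : α ≤ 2) (hu0 : 0 ≤ u) (hu1 : u < 1) :
    ∫ t in 0..u, lowerFactor α t = lowerPrimitive α u := by
  rw [intervalIntegral.integral_eq_sub_of_hasDerivAt_of_le hu0
    (continuousOn_lowerPrimitive hα1 hu1)
    (fun _ ht => hasDerivAt_lowerPrimitive hα1 ht.1 (ht.2.trans hu1))
    (intervalIntegrable_lowerFactor hα1 hα2 hu0 hu1)]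
  simp [lowerPrimitive]

theorem integral_upperFactor (hα : 1 < α) (hu0 : 0 < u) (hu1 : u ≤ 1) :
    ∫ t in u..1, upperFactor α t = -upperPrimitive α u := by
  rw [intervalIntegral.integral_eq_sub_of_hasDerivAt_of_le hu1
    (continuous_upperPrimitive hα).continuousOn
    (fun _ ht => hasDerivAt_upperPrimitive hα (hu0.trans ht.1) ht.2)
    (intervalIntegrable_upperFactor hα hu0 hu1)]
  have hp : α / (2 * α - 2) ≠ 0 := (div_pos (by linarith) (by linarith)).ne'
  simp [upperPrimitive, zero_rpow hp]

theorem lowerPrimitive_mul_upperFactor_sub_lowerFactor_mul_upperPrimitive (hα : 1 < α)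
    (hu0 : 0 < u) (hu1 : u < 1) :
    lowerPrimitive α u * upperFactor α u - lowerFactor α u * upperPrimitive α u = 1 := by
  have hW : 0 < 1 - u ^ (α - 1) := one_sub_rpow_pos hα hu0.le hu1
  have hX : (1 - u ^ (α - 1)) ^ (α / (2 * α - 2)) ≠ 0 := (rpow_pos_of_pos hW _).ne'
  have hα0 : α ≠ 0 := by linarith
  simp only [lowerPrimitive, upperFactor, lowerFactor, upperPrimitive]
  rw [rpow_neg hW.le]
  field_simp
  rw [mul_assoc α, self_mul_rpow_sub_two hu0]
  ring

theorem measurable_powerDensity : Measurable (Function.uncurry (powerDensity α)) := by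
  unfold Function.uncurry powerDensity lowerFactor upperFactor
  fun_prop

theorem lowerFactor_two (hu : u ≠ 1) : lowerFactor 2 u = 1 := by
  have hu' : 1 - u ≠ 0 := sub_ne_zero.2 hu.symm
  norm_num [lowerFactor]
  field_simp

theorem upperFactor_two : upperFactor 2 v = 1 := by
  norm_num [upperFactor]

theorem powerDensity_nonneg (hα1 : 1 < α) (hα2 : α ≤ 2) (hu : u ∈ Icc 0 1) (hv : v ∈ Icc 0 1) :
    0 ≤ powerDensity α u v :=
  mul_nonneg (lowerFactor_nonneg hα1 hα2 (le_min hu.1 hv.1) (min_le_of_left_le hu.2))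
    (upperFactor_nonneg hα1 (le_max_of_le_left hu.1) (max_le hu.2 hv.2))

theorem integrableOn_powerDensity (hα1 : 1 < α) (hα2 : α ≤ 2) (hu0 : 0 < u) (hu1 : u < 1) :
    IntegrableOn (powerDensity α u) (Icc 0 1) :=
  (intervalIntegrable_iff_integrableOn_Icc_of_le zero_le_one).1 <|
    (intervalIntegrable_mul_min_max_of_le hu0.le
      (intervalIntegrable_lowerFactor hα1 hα2 hu0.le hu1)).trans
    (intervalIntegrable_mul_min_max_of_ge hu1.le (intervalIntegrable_upperFactor hα1 hu0 hu1.le))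

theorem setIntegral_powerDensity (hα1 : 1 < α) (hα2 : α ≤ 2) (hu0 : 0 < u) (hu1 : u < 1) :
    ∫ v in Icc 0 1, powerDensity α u v = 1 := by
  rw [integral_Icc_eq_integral_Ioc, ← intervalIntegral.integral_of_le zero_le_one]
  unfold powerDensity
  rw [integral_mul_min_max hu0.le hu1.le (intervalIntegrable_lowerFactor hα1 hα2 hu0.le hu1)
    (intervalIntegrable_upperFactor hα1 hu0 hu1.le), integral_lowerFactor hα1 hα2 hu0.le hu1,
    integral_upperFactor hα1 hu0 hu1.le, mul_neg, ← sub_eq_add_neg]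
  exact lowerPrimitive_mul_upperFactor_sub_lowerFactor_mul_upperPrimitive hα1 hu0 hu1

theorem powerDensity_two (hu : u < 1) : powerDensity 2 u v = 1 := by
  rw [powerDensity, lowerFactor_two ((min_le_left u v).trans_lt hu).ne, upperFactor_two, one_mul]

end PowerDiagonal

open PowerDiagonal

/-- For δ(t) = t^α, α ∈ (1,2], d = 2, the maximum entropy density
c_δ(u,v) = (α/4)·((2-αu^{α-1})/(1-u^{α-1})^{α/(2α-2)})·v^{α-2}(1-v^{α-1})^{(2-α)/(2α-2)}
(for u ≤ v, extended symmetrically) has uniform marginals; for α = 2 it is ≡ 1. -/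
theorem power_diagonal_density_marginals
    (α : ℝ) (hα : α ∈ Set.Ioc (1:ℝ) 2)
    (g : ℝ → ℝ → ℝ)
    (hg : ∀ u v : ℝ, g u v = (α / 4) *
      ((2 - α * u ^ (α - 1)) / (1 - u ^ (α - 1)) ^ (α / (2 * α - 2))) *
      v ^ (α - 2) * (1 - v ^ (α - 1)) ^ ((2 - α) / (2 * α - 2)))
    (c : ℝ × ℝ → ℝ)
    (hc : ∀ p, c p = if p.1 ≤ p.2 then g p.1 p.2 else g p.2 p.1) :
    (∀ r ∈ Set.Icc (0:ℝ) 1,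
      (∫ p in (Set.Icc (0:ℝ) 1 ×ˢ Set.Icc (0:ℝ) 1),
        c p * (if p.1 ≤ r then 1 else 0)) = r) ∧
    (α = 2 → ∀ p ∈ (Set.Ioo (0:ℝ) 1 ×ˢ Set.Ioo (0:ℝ) 1), c p = 1) := by
  obtain ⟨hα1, hα2⟩ := hα
  have hc_eq : c = Function.uncurry (powerDensity α) := by
    funext ⟨x, y⟩
    rw [hc, Function.uncurry_apply_pair, powerDensity]
    split_ifs with h
    · rw [min_eq_left h, max_eq_right h, hg, lowerFactor, upperFactor]; ring
    · rw [min_eq_right (le_of_not_ge h), max_eq_left (le_of_not_ge h), hg, lowerFactor,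
        upperFactor]; ring
  subst hc_eq
  refine ⟨fun r hr => ?_, fun hα_two p hp => ?_⟩
  · have hinterior : ∀ᵐ x ∂volume.restrict (Icc (0 : ℝ) 1), x ∈ Ioo 0 1 := by
      rw [← Measure.restrict_congr_set Ioo_ae_eq_Icc]
      exact ae_restrict_mem measurableSet_Ioo
    rw [Measure.volume_eq_prod, setIntegral_prod_mul_fst_of_marginal_eq_one measurableSet_Icc
      (by simp) measurableSet_Icc measurable_powerDensity
      (fun p hp => powerDensity_nonneg hα1 hα2 hp.1 hp.2)
      (hinterior.mono fun x hx => integrableOn_powerDensity hα1 hα2 hx.1 hx.2)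
      (hinterior.mono fun x hx => setIntegral_powerDensity hα1 hα2 hx.1 hx.2)
      (measurable_const.ite measurableSet_Iic measurable_const) (C := 1)
      (fun x => by split_ifs <;> norm_num)]
    exact setIntegral_Icc_zero_one_ite_le hr
  · subst hα_two
    exact powerDensity_two hp.1.2
end

section
/- Let δ ∈ D and suppose c ∈ L^1([0,1]^d) is non-negative, satisfies the marginal constraints ∫ c(u)1{u_i ≤ r}du = r for all i and r, and the diagonal constraint ∫ c(u)1{max(u) ≤ r}du = δ(r) for all r. Then c = 0 a.e. on the set {u : δ'(max(u)) = 0}. -/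
/-!
Push the measure `c u du` on the cube forward along `u ↦ max u`. By the diagonal constraint the
image measure `μ` lives on `[0, 1]` and has distribution function `δ`, so it is the Stieltjes
measure of `δ` (extended constantly). Since `δ` is `d`-Lipschitz, `μ ≤ d • volume`; hence `μ` has
a Radon–Nikodym density, which is `μ`-a.e. positive and, by Lebesgue differentiation, equals
`δ'` a.e. Thus `μ {δ' = 0} = 0`, which pulled back along `max` is the claim.
-/

open MeasureTheory Set Filter Topology

namespace StieltjesFunction

theorem measure_absolutelyContinuous_of_lipschitzWith {f : StieltjesFunction ℝ} {K : NNReal}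
    (hf : LipschitzWith K f) : f.measure ≪ volume := by
  let g : StieltjesFunction ℝ :=
    { toFun := fun x => K * x - f x
      mono' := fun x y hxy => by
        have := (abs_sub_le_iff.1 (hf.dist_le_mul y x)).1
        rw [Real.dist_eq, abs_of_nonneg (sub_nonneg.2 hxy)] at this
        dsimp only
        linarith
      right_continuous' := fun x =>
        ((continuous_const.mul continuous_id).sub hf.continuous).continuousWithinAt }
  have hfg : f + g = K • StieltjesFunction.id := by
    ext x
    change f x + (K * x - f x) = K * x
    ring
  refine Measure.absolutelyContinuous_of_le_smul (c := (K : ENNReal)) ?_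
  calc f.measure ≤ f.measure + g.measure := Measure.le_add_right le_rfl
    _ = (K : ENNReal) • volume := by
      rw [← measure_add, hfg, measure_smul, ← Real.volume_eq_stieltjes_id]; rfl

theorem ae_pos_of_hasDerivAt {f : StieltjesFunction ℝ} (hf : f.measure ≪ volume) :
    ∀ᵐ x ∂f.measure, ∀ f', HasDerivAt f f' x → 0 < f' := by
  filter_upwards [Measure.rnDeriv_pos hf, hf.ae_le (Measure.rnDeriv_ne_top f.measure volume),
    hf.ae_le f.ae_hasDerivAt] with x hpos hne_top hderiv f' hf'
  rw [hf'.unique hderiv]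
  exact ENNReal.toReal_pos hpos.ne' hne_top

noncomputable def ofLipschitzOnIcc {a b : ℝ} (hab : a ≤ b) {f : ℝ → ℝ} {K : NNReal}
    (hmono : MonotoneOn f (Icc a b)) (hlip : LipschitzOnWith K f (Icc a b)) :
    StieltjesFunction ℝ where
  toFun x := f (projIcc a b hab x)
  mono' _ _ hxy := hmono (projIcc a b hab _).2 (projIcc a b hab _).2 (monotone_projIcc hab hxy)
  right_continuous' _ :=
    (hlip.to_restrict.comp (LipschitzWith.projIcc hab)).continuous.continuousWithinAt

section ofLipschitzOnIcc

variable {a b : ℝ} (hab : a ≤ b) {f : ℝ → ℝ} {K : NNReal}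
    (hmono : MonotoneOn f (Icc a b)) (hlip : LipschitzOnWith K f (Icc a b))

theorem ofLipschitzOnIcc_apply (x : ℝ) :
    ofLipschitzOnIcc hab hmono hlip x = f (projIcc a b hab x) := rfl

theorem lipschitzWith_ofLipschitzOnIcc :
    LipschitzWith K (ofLipschitzOnIcc hab hmono hlip) :=
  (hlip.to_restrict.comp (LipschitzWith.projIcc hab)).weaken (mul_one K).le

theorem ofLipschitzOnIcc_eventuallyEq {x : ℝ} (hx : x ∈ Ioo a b) :
    ofLipschitzOnIcc hab hmono hlip =ᶠ[𝓝 x] f := by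
  filter_upwards [Ioo_mem_nhds hx.1 hx.2] with y hy
  rw [ofLipschitzOnIcc_apply, projIcc_of_mem hab (Ioo_subset_Icc_self hy)]

theorem eq_measure_ofLipschitzOnIcc {μ : Measure ℝ} [IsFiniteMeasure μ] (ha : f a = 0)
    (hsupp : ∀ᵐ x ∂μ, x ∈ Icc a b) (hIic : ∀ x ∈ Icc a b, μ (Iic x) = ENNReal.ofReal (f x)) :
    μ = (ofLipschitzOnIcc hab hmono hlip).measure := by
  set F := ofLipschitzOnIcc hab hmono hlip
  have hF_left : ∀ x ≤ a, F x = 0 := fun x hx => by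
    rw [ofLipschitzOnIcc_apply, projIcc_of_le_left hab hx, ← ha]
  have hF_bot : Tendsto F atBot (𝓝 0) :=
    tendsto_const_nhds.congr' ((eventually_le_atBot a).mono fun x hx => (hF_left x hx).symm)
  refine Measure.ext_of_Iic _ _ fun x => ?_
  rw [F.measure_Iic hF_bot, sub_zero, ← measure_inter_conull (t := Icc a b) hsupp]
  rcases lt_or_ge x a with hxa | hax
  · have : Iic x ∩ Icc a b = ∅ := by
      ext t; simp only [mem_inter_iff, mem_Iic, mem_Icc, mem_empty_iff_false, iff_false]
      intro h; linarith [h.2.1]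
    rw [hF_left x hxa.le, this, measure_empty, ENNReal.ofReal_zero]
  · have : Iic x ∩ Icc a b = Iic (projIcc a b hab x : ℝ) ∩ Icc a b := by
      ext t
      simp only [mem_inter_iff, mem_Iic, mem_Icc, coe_projIcc, le_max_iff, le_min_iff]
      grind
    rw [this, measure_inter_conull (t := Icc a b) hsupp, hIic _ (projIcc a b hab x).2,
      ofLipschitzOnIcc_apply]

end ofLipschitzOnIcc

end StieltjesFunction

open StieltjesFunction in
theorem ae_deriv_pos_of_measure_Iic_eq {μ : Measure ℝ} [IsFiniteMeasure μ] {a b : ℝ}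
    (hab : a ≤ b) {f f' : ℝ → ℝ} {K : NNReal} (hmono : MonotoneOn f (Icc a b))
    (hlip : LipschitzOnWith K f (Icc a b)) (ha : f a = 0)
    (hderiv : ∀ᵐ x ∂volume.restrict (Icc a b), HasDerivAt f (f' x) x)
    (hsupp : ∀ᵐ x ∂μ, x ∈ Icc a b) (hIic : ∀ x ∈ Icc a b, μ (Iic x) = ENNReal.ofReal (f x)) :
    ∀ᵐ x ∂μ, 0 < f' x := by
  have hμ := eq_measure_ofLipschitzOnIcc hab hmono hlip ha hsupp hIic
  have hac : μ ≪ volume := hμ ▸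
    measure_absolutelyContinuous_of_lipschitzWith (lipschitzWith_ofLipschitzOnIcc hab hmono hlip)
  have hends : ∀ᵐ x ∂volume, x ∉ ({a, b} : Set ℝ) := (toFinite _).countable.ae_notMem volume
  filter_upwards [hsupp, hac.ae_le hends,
    hac.ae_le ((ae_restrict_iff' measurableSet_Icc).1 hderiv),
    hμ ▸ ae_pos_of_hasDerivAt (hμ ▸ hac)] with x hx hx_ends hfx hpos
  have hx' : x ∈ Ioo a b := (Icc_sdiff_both (a := a) (b := b)) ▸ ⟨hx, hx_ends⟩
  exact hpos _ ((hfx hx).congr_of_eventuallyEq (ofLipschitzOnIcc_eventuallyEq hab hmono hlip hx'))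

theorem map_withDensity_ofReal_apply {α β : Type*} [MeasurableSpace α] [MeasurableSpace β]
    {μ : Measure α} {f : α → ℝ} (hf : Integrable f μ) (hf0 : 0 ≤ᵐ[μ] f) {g : α → β}
    (hg : Measurable g) {s : Set β} (hs : MeasurableSet s) :
    (μ.withDensity fun x => ENNReal.ofReal (f x)).map g s =
      ENNReal.ofReal (∫ x in g ⁻¹' s, f x ∂μ) := by
  rw [Measure.map_apply hg hs, withDensity_apply _ (hg hs),
    ofReal_integral_eq_lintegral_ofReal hf.integrableOn (ae_restrict_of_ae hf0)]

theorem vanishing_where_delta_deriv_zero_general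
    (d : ℕ) (δ δ' : ℝ → ℝ)
    (hmono : MonotoneOn δ (Set.Icc 0 1))
    (hlip : ∀ s ∈ Set.Icc (0:ℝ) 1, ∀ t ∈ Set.Icc (0:ℝ) 1,
      |δ s - δ t| ≤ (d : ℝ) * |s - t|)
    (h0 : δ 0 = 0)
    (hderiv : ∀ᵐ t ∂(volume.restrict (Set.Icc (0:ℝ) 1)), HasDerivAt δ (δ' t) t)
    (c : (Fin d → ℝ) → ℝ)
    (hint : IntegrableOn c (Set.univ.pi (fun _ : Fin d => Set.Icc (0:ℝ) 1)))
    (hnn : ∀ᵐ u ∂(volume.restrict (Set.univ.pi (fun _ : Fin d => Set.Icc (0:ℝ) 1))),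
      0 ≤ c u)
    (hdiag : ∀ r ∈ Set.Icc (0:ℝ) 1,
      (∫ u in Set.univ.pi (fun _ : Fin d => Set.Icc (0:ℝ) 1),
        c u * (if (⨆ i, u i) ≤ r then 1 else 0)) = δ r) :
    ∀ᵐ u ∂(volume.restrict (Set.univ.pi (fun _ : Fin d => Set.Icc (0:ℝ) 1))),
      δ' (⨆ i, u i) = 0 → c u = 0 := by
  have hm : Measurable fun u : Fin d → ℝ => ⨆ i, u i := Measurable.iSup measurable_pi_apply
  set ν := (volume.restrict (univ.pi fun _ : Fin d => Icc (0:ℝ) 1)).withDensity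
    fun u => ENNReal.ofReal (c u)
  have : IsFiniteMeasure ν := isFiniteMeasure_withDensity_ofReal hint.2
  have hsupp : ∀ᵐ t ∂ν.map fun u => ⨆ i, u i, t ∈ Icc (0:ℝ) 1 := by
    refine (ae_map_iff hm.aemeasurable measurableSet_Icc).2
      ((withDensity_absolutelyContinuous _ _).ae_le ?_)
    filter_upwards [ae_restrict_mem (MeasurableSet.univ_pi fun _ => measurableSet_Icc)] with u hu
    exact ⟨Real.iSup_nonneg fun i => (hu i trivial).1,
      Real.iSup_le (fun i => (hu i trivial).2) zero_le_one⟩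
  have hIic : ∀ r ∈ Icc (0:ℝ) 1, ν.map (fun u => ⨆ i, u i) (Iic r) = ENNReal.ofReal (δ r) :=
    fun r hr => by
      rw [map_withDensity_ofReal_apply hint hnn hm measurableSet_Iic, ← hdiag r hr,
        ← integral_indicator (hm measurableSet_Iic)]
      congr with u
      by_cases h : ⨆ i, u i ≤ r <;> simp [h]
  have hlip' : LipschitzOnWith d δ (Icc 0 1) :=
    .of_dist_le_mul fun s hs t ht => by
      simpa only [Real.dist_eq, NNReal.coe_natCast] using hlip s hs t ht
  have hpos := ae_of_ae_map hm.aemeasurable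
    (ae_deriv_pos_of_measure_Iic_eq zero_le_one hmono hlip' h0 hderiv hsupp hIic)
  rw [ae_withDensity_iff' hint.1.aemeasurable.ennreal_ofReal] at hpos
  filter_upwards [hpos, hnn] with u hu hcu hδ'
  have hc : ENNReal.ofReal (c u) = 0 := not_imp_comm.1 hu hδ'.not_gt
  exact le_antisymm (ENNReal.ofReal_eq_zero.1 hc) hcu

/-- If c is a non-negative integrable function on the cube with uniform
marginals and diagonal constraint δ, then c = 0 a.e. on {u : δ'(max u) = 0}. -/
theorem vanishing_where_delta_deriv_zero
    (d : ℕ) (hd : 2 ≤ d) (δ δ' : ℝ → ℝ)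
    (hmono : MonotoneOn δ (Set.Icc 0 1))
    (hlip : ∀ s ∈ Set.Icc (0:ℝ) 1, ∀ t ∈ Set.Icc (0:ℝ) 1,
      |δ s - δ t| ≤ (d : ℝ) * |s - t|)
    (h0 : δ 0 = 0) (h1 : δ 1 = 1)
    (hderiv : ∀ᵐ t ∂(volume.restrict (Set.Icc (0:ℝ) 1)), HasDerivAt δ (δ' t) t)
    (hd' : ∀ᵐ t ∂(volume.restrict (Set.Icc (0:ℝ) 1)), δ' t ∈ Set.Icc (0:ℝ) (d:ℝ))
    (c : (Fin d → ℝ) → ℝ)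
    (hint : IntegrableOn c (Set.univ.pi (fun _ : Fin d => Set.Icc (0:ℝ) 1)))
    (hnn : ∀ᵐ u ∂(volume.restrict (Set.univ.pi (fun _ : Fin d => Set.Icc (0:ℝ) 1))),
      0 ≤ c u)
    (hmarg : ∀ i : Fin d, ∀ r ∈ Set.Icc (0:ℝ) 1,
      (∫ u in Set.univ.pi (fun _ : Fin d => Set.Icc (0:ℝ) 1),
        c u * (if u i ≤ r then 1 else 0)) = r)
    (hdiag : ∀ r ∈ Set.Icc (0:ℝ) 1,
      (∫ u in Set.univ.pi (fun _ : Fin d => Set.Icc (0:ℝ) 1),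
        c u * (if (⨆ i, u i) ≤ r then 1 else 0)) = δ r) :
    ∀ᵐ u ∂(volume.restrict (Set.univ.pi (fun _ : Fin d => Set.Icc (0:ℝ) 1))),
      δ' (⨆ i, u i) = 0 → c u = 0 :=
  vanishing_where_delta_deriv_zero_general d δ δ' hmono hlip h0 hderiv c hint hnn hdiag
end

section
/- Let δ ∈ D and Σ_δ = {t : δ(t) = t}. If c is a copula density with diagonal section δ and s ∈ Σ_δ, then c = 0 a.e. on the set {u ∈ [0,1]^d : min(u) < s < max(u)}; hence any such c is supported on ⋃_j [α_j,β_j]^d ∪ {(t,...,t) : t ∈ Σ_δ}, where (α_j,β_j) are the connected components of [0,1]∖Σ_δ. -/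
open MeasureTheory Set

/-- If c is a copula density with diagonal section δ and s is a fixed
point of δ, then c = 0 a.e. on {u : min(u) < s < max(u)}; hence a.e. the support of c
avoids straddling any fixed point of δ. -/
theorem copula_density_vanishes_across_fixed_points
    (d : ℕ) (hd : 2 ≤ d) (δ : ℝ → ℝ)
    (hmono : MonotoneOn δ (Set.Icc 0 1))
    (hlip : ∀ s ∈ Set.Icc (0:ℝ) 1, ∀ t ∈ Set.Icc (0:ℝ) 1,
      |δ s - δ t| ≤ (d : ℝ) * |s - t|)
    (h0 : δ 0 = 0) (h1 : δ 1 = 1)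
    (hle : ∀ t ∈ Set.Icc (0:ℝ) 1, δ t ≤ t)
    (c : (Fin d → ℝ) → ℝ)
    (hint : IntegrableOn c (Set.univ.pi (fun _ : Fin d => Set.Icc (0:ℝ) 1)))
    (hnn : ∀ u, 0 ≤ c u)
    (hmarg : ∀ i : Fin d, ∀ r ∈ Set.Icc (0:ℝ) 1,
      (∫ u in Set.univ.pi (fun _ : Fin d => Set.Icc (0:ℝ) 1),
        c u * (if u i ≤ r then 1 else 0)) = r)
    (hdiag : ∀ r ∈ Set.Icc (0:ℝ) 1,
      (∫ u in Set.univ.pi (fun _ : Fin d => Set.Icc (0:ℝ) 1),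
        c u * (if (⨆ i, u i) ≤ r then 1 else 0)) = δ r) :
    (∀ s ∈ Set.Icc (0:ℝ) 1, δ s = s →
      (∀ᵐ u ∂(volume.restrict (Set.univ.pi (fun _ : Fin d => Set.Icc (0:ℝ) 1))),
        ((⨅ i, u i) < s ∧ s < (⨆ i, u i)) → c u = 0)) ∧
    (∀ᵐ u ∂(volume.restrict (Set.univ.pi (fun _ : Fin d => Set.Icc (0:ℝ) 1))),
      c u ≠ 0 → ∀ s ∈ Set.Icc (0:ℝ) 1, δ s = s →
        ¬((⨅ i, u i) < s ∧ s < (⨆ i, u i))) := by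
  haveI : Nonempty (Fin d) := ⟨⟨0, by omega⟩⟩
  set B : Set (Fin d → ℝ) := Set.univ.pi (fun _ : Fin d => Set.Icc (0:ℝ) 1) with hB
  set μ := volume.restrict B with hμ
  have hsupmeas : Measurable (fun u : Fin d → ℝ => ⨆ i, u i) :=
    Measurable.iSup (fun i => measurable_pi_apply i)
  -- key step
  have key : ∀ s ∈ Set.Icc (0:ℝ) 1, δ s = s →
      (∀ᵐ u ∂μ, ((⨅ i, u i) < s ∧ s < (⨆ i, u i)) → c u = 0) := by
    intro s hs hfix
    have hci : Integrable c μ := hint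
    have keyi : ∀ i : Fin d,
        ∀ᵐ u ∂μ, (u i ≤ s ∧ s < (⨆ j, u j)) → c u = 0 := by
      intro i
      set χ₁ : (Fin d → ℝ) → ℝ := fun u => if u i ≤ s then 1 else 0 with hχ₁
      set χ₂ : (Fin d → ℝ) → ℝ := fun u => if (⨆ j, u j) ≤ s then 1 else 0 with hχ₂
      have hm₁ : Measurable χ₁ :=
        Measurable.ite (measurableSet_le (measurable_pi_apply i) measurable_const)
          measurable_const measurable_const
      have hm₂ : Measurable χ₂ :=
        Measurable.ite (measurableSet_le hsupmeas measurable_const)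
          measurable_const measurable_const
      have hb₁ : ∀ u, ‖χ₁ u‖ ≤ 1 := by
        intro u; simp only [hχ₁]; split <;> simp
      have hb₂ : ∀ u, ‖χ₂ u‖ ≤ 1 := by
        intro u; simp only [hχ₂]; split <;> simp
      have hi₁ : Integrable (fun u => c u * χ₁ u) μ := by
        have := hci.bdd_mul (hm₁.aestronglyMeasurable) (Filter.Eventually.of_forall hb₁)
        simpa [mul_comm] using this
      have hi₂ : Integrable (fun u => c u * χ₂ u) μ := by
        have := hci.bdd_mul (hm₂.aestronglyMeasurable) (Filter.Eventually.of_forall hb₂)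
        simpa [mul_comm] using this
      have hnonneg : ∀ u, 0 ≤ c u * χ₁ u - c u * χ₂ u := by
        intro u
        rw [← mul_sub]
        apply mul_nonneg (hnn u)
        simp only [hχ₁, hχ₂]
        by_cases h2 : (⨆ j, u j) ≤ s
        · have h1 : u i ≤ s := le_trans (le_ciSup (Set.Finite.bddAbove (finite_range u)) i) h2
          simp [h1, h2]
        · split <;> simp [h2]
      have hzero : ∫ u, (c u * χ₁ u - c u * χ₂ u) ∂μ = 0 := by
        rw [integral_sub hi₁ hi₂]
        have e1 : ∫ u, c u * χ₁ u ∂μ = s := hmarg i s hs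
        have e2 : ∫ u, c u * χ₂ u ∂μ = δ s := hdiag s hs
        rw [e1, e2, hfix, sub_self]
      have hae : (fun u => c u * χ₁ u - c u * χ₂ u) =ᵐ[μ] 0 := by
        rw [← integral_eq_zero_iff_of_nonneg hnonneg (hi₁.sub hi₂)]
        exact hzero
      filter_upwards [hae] with u hu hcond
      obtain ⟨h1, h2⟩ := hcond
      have hχ1 : χ₁ u = 1 := by simp [hχ₁, h1]
      have hχ2 : χ₂ u = 0 := by simp [hχ₂, not_le.mpr h2]
      have : c u * χ₁ u - c u * χ₂ u = 0 := hu
      rw [hχ1, hχ2, mul_one, mul_zero, sub_zero] at this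
      exact this
    have hall : ∀ᵐ u ∂μ, ∀ i : Fin d, (u i ≤ s ∧ s < (⨆ j, u j)) → c u = 0 :=
      ae_all_iff.mpr keyi
    filter_upwards [hall] with u hu hcond
    obtain ⟨h1, h2⟩ := hcond
    obtain ⟨i, hi⟩ := exists_lt_of_ciInf_lt h1
    exact hu i ⟨le_of_lt hi, h2⟩
  refine ⟨key, ?_⟩
  -- countable dense subset of the fixed point set
  set Sfix : Set ℝ := {s ∈ Set.Icc (0:ℝ) 1 | δ s = s} with hSfix
  obtain ⟨D, hDsub, hDc, hDd⟩ :=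
    (TopologicalSpace.IsSeparable.of_separableSpace Sfix).exists_countable_dense_subset
  haveI : Countable D := hDc.to_subtype
  have hallD : ∀ᵐ u ∂μ, ∀ s : D, ((⨅ i, u i) < (s : ℝ) ∧ (s : ℝ) < (⨆ i, u i)) → c u = 0 := by
    rw [ae_all_iff]
    intro s
    exact key s (hDsub s.2).1 (hDsub s.2).2
  filter_upwards [hallD] with u hu hcne s hs hfix hcond
  obtain ⟨h1, h2⟩ := hcond
  have hsmem : s ∈ Sfix := ⟨hs, hfix⟩
  have hscl : s ∈ closure D := hDd hsmem
  have hopen : IsOpen (Set.Ioo (⨅ i, u i) (⨆ i, u i)) := isOpen_Ioo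
  obtain ⟨s', hs'mem, hs'D⟩ := _root_.mem_closure_iff.mp hscl _ hopen ⟨h1, h2⟩
  exact hcne (hu ⟨s', hs'D⟩ ⟨hs'mem.1, hs'mem.2⟩)
end
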